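/- For any matrices G_0, ..., G_{T-1} ∈ R^{m×n}, it holds that tr( (Σ_{t=0}^{T-1} G_t G_tᵀ)^{1/2} ) ≤ tr( (Σ_{t=0}^{T-1} G_t G_tᵀ)^{1/4} ) · tr( (Σ_{t=0}^{T-1} G_tᵀ G_t)^{1/4} ); i.e., the proven ASGO bound is never worse than the Shampoo bound (up to the diameter and rank factors). -/

import Mathlib

open Matrix
open scoped Classical

/-- The positive semidefinite square root of a positive semidefinite real matrix
(junk value `0` if the matrix is not positive semidefinite). -/
noncomputable def psdSqrt {k : ℕ} (X : Matrix (Fin k) (Fin k) ℝ) : Matrix (Fin k) (Fin k) ℝ :=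
  if h : X.PosSemidef then
    h.1.eigenvectorUnitary.1 * diagonal (Real.sqrt ∘ h.1.eigenvalues) *
      (star h.1.eigenvectorUnitary : Matrix (Fin k) (Fin k) ℝ)
  else 0

/-- The positive semidefinite fourth root `X^{1/4} = (X^{1/2})^{1/2}`. -/
noncomputable def psdFourthRoot {k : ℕ} (X : Matrix (Fin k) (Fin k) ℝ) :
    Matrix (Fin k) (Fin k) ℝ :=
  psdSqrt (psdSqrt X)

/-!
With `λ` the eigenvalues of `∑ G Gᵀ` and `μ` those of `∑ Gᵀ G`, both traces are `∑ λ = ∑ μ`.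
Hence every `λᵢ^{1/4} ≤ (∑ μ)^{1/4} ≤ ∑ μⱼ^{1/4}` by subadditivity of the square root, and
`∑ √λᵢ = ∑ λᵢ^{1/4} λᵢ^{1/4} ≤ (∑ λᵢ^{1/4}) (∑ μⱼ^{1/4})`.
-/

namespace Matrix

variable {n 𝕜 : Type*} [Fintype n] [DecidableEq n] [RCLike 𝕜]

lemma IsHermitian.trace_cfc {A : Matrix n n 𝕜} (hA : A.IsHermitian) (f : ℝ → ℝ) :
    (cfc f A).trace = ∑ i, (f (hA.eigenvalues i) : 𝕜) := by
  rw [hA.cfc_eq, IsHermitian.cfc, Unitary.conjStarAlgAut_apply, trace_mul_cycle,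
    Unitary.coe_star_mul_self, one_mul, trace_diagonal]
  rfl

end Matrix

lemma Real.sqrt_sum_le_sum_sqrt {ι : Type*} (s : Finset ι) {f : ι → ℝ}
    (hf : ∀ i ∈ s, 0 ≤ f i) : √(∑ i ∈ s, f i) ≤ ∑ i ∈ s, √(f i) := by
  rw [Real.sqrt_le_left (Finset.sum_nonneg fun i _ => Real.sqrt_nonneg _)]
  calc ∑ i ∈ s, f i = ∑ i ∈ s, √(f i) ^ 2 :=
        Finset.sum_congr rfl fun i hi => (Real.sq_sqrt (hf i hi)).symm
    _ ≤ (∑ i ∈ s, √(f i)) ^ 2 :=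
        Finset.sum_sq_le_sq_sum_of_nonneg fun i _ => Real.sqrt_nonneg _

variable {k : ℕ}

lemma psdSqrt_eq_cfc {A : Matrix (Fin k) (Fin k) ℝ} (hA : A.PosSemidef) :
    psdSqrt A = cfc Real.sqrt A := by
  rw [hA.1.cfc_eq, IsHermitian.cfc, Unitary.conjStarAlgAut_apply]
  exact dif_pos hA

open scoped MatrixOrder in
lemma posSemidef_psdSqrt {A : Matrix (Fin k) (Fin k) ℝ} (hA : A.PosSemidef) :
    (psdSqrt A).PosSemidef := by
  rw [psdSqrt_eq_cfc hA, ← nonneg_iff_posSemidef]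
  exact cfc_nonneg fun x _ => Real.sqrt_nonneg x

lemma psdFourthRoot_eq_cfc {A : Matrix (Fin k) (Fin k) ℝ} (hA : A.PosSemidef) :
    psdFourthRoot A = cfc (fun x => √√x) A := by
  rw [psdFourthRoot, psdSqrt_eq_cfc (posSemidef_psdSqrt hA), psdSqrt_eq_cfc hA]
  exact (cfc_comp Real.sqrt Real.sqrt A hA.1).symm

lemma sum_sqrt_le_sum_sqrt_sqrt_mul {ι κ : Type*} [Fintype ι] [Fintype κ] {a : ι → ℝ}
    {b : κ → ℝ} (ha : ∀ i, 0 ≤ a i) (hb : ∀ j, 0 ≤ b j) (hab : ∑ i, a i ≤ ∑ j, b j) :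
    ∑ i, √(a i) ≤ (∑ i, √√(a i)) * ∑ j, √√(b j) := by
  have h_le (i : ι) : √√(a i) ≤ ∑ j, √√(b j) :=
    calc √√(a i) ≤ √√(∑ j, b j) :=
          Real.sqrt_le_sqrt <| Real.sqrt_le_sqrt <|
            (Finset.single_le_sum (fun i _ => ha i) (Finset.mem_univ i)).trans hab
      _ ≤ √(∑ j, √(b j)) := Real.sqrt_le_sqrt <| Real.sqrt_sum_le_sum_sqrt _ fun j _ => hb j
      _ ≤ ∑ j, √√(b j) := Real.sqrt_sum_le_sum_sqrt _ fun j _ => Real.sqrt_nonneg _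
  rw [Finset.sum_mul]
  refine Finset.sum_le_sum fun i _ => ?_
  calc √(a i) = √√(a i) * √√(a i) := (Real.mul_self_sqrt (Real.sqrt_nonneg _)).symm
    _ ≤ √√(a i) * ∑ j, √√(b j) := by gcongr; exact h_le i

/-- for any matrices `G_0, ..., G_{T-1} ∈ ℝ^{m×n}`,
`tr((∑_t G_t G_tᵀ)^{1/2}) ≤ tr((∑_t G_t G_tᵀ)^{1/4}) · tr((∑_t G_tᵀ G_t)^{1/4})`:
the proven ASGO bound is never worse than the Shampoo bound. -/
theorem stmt14 (m n T : ℕ) (G : Fin T → Matrix (Fin m) (Fin n) ℝ) :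
    (psdSqrt (∑ t, G t * (G t)ᵀ)).trace ≤
      (psdFourthRoot (∑ t, G t * (G t)ᵀ)).trace * (psdFourthRoot (∑ t, (G t)ᵀ * G t)).trace := by
  have hA : (∑ t, G t * (G t)ᵀ).PosSemidef :=
    posSemidef_sum _ fun t _ => by simpa using posSemidef_self_mul_conjTranspose (G t)
  have hB : (∑ t, (G t)ᵀ * G t).PosSemidef :=
    posSemidef_sum _ fun t _ => by simpa using posSemidef_conjTranspose_mul_self (G t)
  have h_trace : ∑ i, hA.1.eigenvalues i = ∑ j, hB.1.eigenvalues j := by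
    have hA_trace := hA.1.trace_eq_sum_eigenvalues
    have hB_trace := hB.1.trace_eq_sum_eigenvalues
    simp only [RCLike.ofReal_real_eq_id, id] at hA_trace hB_trace
    rw [← hA_trace, ← hB_trace, trace_sum, trace_sum]
    exact Finset.sum_congr rfl fun t _ => trace_mul_comm _ _
  rw [psdSqrt_eq_cfc hA, psdFourthRoot_eq_cfc hA, psdFourthRoot_eq_cfc hB, hA.1.trace_cfc,
    hA.1.trace_cfc, hB.1.trace_cfc]
  exact sum_sqrt_le_sum_sqrt_sqrt_mul hA.eigenvalues_nonneg hB.eigenvalues_nonneg h_trace.le
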